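/- Let $q$ be a prime power and let $f(t) \in \mathbb{F}_q[t]$ be a nonzero polynomial of degree at most $n$ (with $n \geq 1$). Then there exists a finite field $\mathbb{F}$ with $2n < |\mathbb{F}| \leq 2nq$ and a ring homomorphism $\phi : \mathbb{F}_q[t] \to \mathbb{F}$ such that $\phi(f(t)) \neq 0$. -/

import Mathlib

/-! Take `F` to be the extension of `𝔽_q` of degree `d = ⌊log_q (2n)⌋ + 1`, so that
`2n < q^d ≤ 2nq`. Since `deg f ≤ n < |F|`, the polynomial `f` has a non-root `r ∈ F`, and
evaluation at `r` is the required homomorphism. -/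

/-- Auxiliary predicate: `F` is a finite field of size in `(2n, 2nq]` admitting a ring
homomorphism from `Fq[t]` not killing `f`. -/
def GoodTargetField (n q : ℕ) {Fq : Type} [Field Fq] (f : Polynomial Fq)
    (F : Type) [Field F] [Fintype F] : Prop :=
  2 * n < Fintype.card F ∧ Fintype.card F ≤ 2 * n * q ∧
    ∃ φ : Polynomial Fq →+* F, φ f ≠ 0

open Polynomial

theorem Nat.exists_pow_mem_Ioc_mul {b N : ℕ} (hb : 1 < b) (hN : N ≠ 0) :
    ∃ d, 0 < d ∧ b ^ d ∈ Set.Ioc N (N * b) :=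
  ⟨Nat.log b N + 1, Nat.succ_pos _, Nat.lt_pow_succ_log_self hb N,
    pow_succ b _ ▸ Nat.mul_le_mul_right b (Nat.pow_log_le_self b hN)⟩

theorem Polynomial.exists_ringHom_apply_ne_zero_of_natDegree_lt_card {K L : Type*} [Field K]
    [Field L] [Finite L] (i : K →+* L) {f : K[X]} (hf : f ≠ 0) (hdeg : f.natDegree < Nat.card L) :
    ∃ φ : K[X] →+* L, φ f ≠ 0 := by
  have hmap : (f.map i).natDegree < Cardinal.mk L := by
    rw [natDegree_map, ← Nat.cast_card]
    exact_mod_cast hdeg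
  obtain ⟨r, hr⟩ := (f.map i).exists_eval_ne_zero_of_natDegree_lt_card (map_ne_zero hf) hmap
  exact ⟨eval₂RingHom i r, by rwa [coe_eval₂RingHom, ← eval_map]⟩

theorem FiniteField.exists_extension_card_eq_pow (K : Type) [Field K] [Finite K] {d : ℕ}
    (hd : 0 < d) : ∃ (L : Type) (_ : Field L) (_ : Finite L) (_ : Algebra K L),
      Nat.card L = Nat.card K ^ d := by
  have : Fact (ringChar K).Prime := ⟨CharP.char_is_prime K _⟩
  have : NeZero d := ⟨hd.ne'⟩
  exact ⟨Extension K (ringChar K) d, inferInstance, inferInstance, inferInstance,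
    natCard_extension K (ringChar K) d⟩

theorem stmt2_general (q : ℕ)
    (Fq : Type) [Field Fq] [Fintype Fq] (hcard : Fintype.card Fq = q)
    (n : ℕ) (hn : 1 ≤ n) (f : Polynomial Fq) (hf : f ≠ 0) (hdeg : f.natDegree ≤ n) :
    ∃ (F : Type) (iF : Field F) (iFin : Fintype F),
      @GoodTargetField n q Fq _ f F iF iFin := by
  have hq : Nat.card Fq = q := Nat.card_eq_fintype_card.trans hcard
  obtain ⟨d, hd, hlow, hup⟩ :=
    Nat.exists_pow_mem_Ioc_mul (hq ▸ Finite.one_lt_card) (by omega : 2 * n ≠ 0)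
  obtain ⟨F, _, _, _, hF⟩ := FiniteField.exists_extension_card_eq_pow Fq hd
  rw [hq] at hF
  obtain ⟨φ, hφ⟩ := exists_ringHom_apply_ne_zero_of_natDegree_lt_card (algebraMap Fq F) hf
    (by omega)
  let _ := Fintype.ofFinite F
  refine ⟨F, inferInstance, inferInstance, ?_, ?_, φ, hφ⟩ <;>
    rw [Fintype.card_eq_nat_card, hF] <;> omega

/-- For a nonzero `f ∈ 𝔽_q[t]` of degree at most `n`, there is a finite field `F`
with `2n < |F| ≤ 2nq` and a ring homomorphism `𝔽_q[t] → F` not killing `f`. -/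
theorem stmt2 (q : ℕ) (hq : ∃ p m : ℕ, p.Prime ∧ 0 < m ∧ q = p ^ m)
    (Fq : Type) [Field Fq] [Fintype Fq] (hcard : Fintype.card Fq = q)
    (n : ℕ) (hn : 1 ≤ n) (f : Polynomial Fq) (hf : f ≠ 0) (hdeg : f.natDegree ≤ n) :
    ∃ (F : Type) (iF : Field F) (iFin : Fintype F),
      @GoodTargetField n q Fq _ f F iF iFin :=
  stmt2_general q Fq hcard n hn f hf hdeg
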